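/- arXiv:1512.00311 — 2 statements merged into one kernel-verified Lean document; each statement's English description precedes it below -/
import Mathlib

section
/- Let A be real skew-symmetric and nonsingular, and let x^R be the unique vector in K_q(A², Ab) minimizing ‖b - Az‖ over z ∈ K_q(A², Ab). Then x^R also minimizes ‖b - Az‖ over the larger subspace K_{2q+1}(A, b). -/
open Matrix

def krylov {n : ℕ} (M : Matrix (Fin n) (Fin n) ℝ) (v : Fin n → ℝ) (m : ℕ) :
    Submodule ℝ (Fin n → ℝ) :=
  Submodule.span ℝ ((fun k => (M ^ k) *ᵥ v) '' Set.Iio m)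

noncomputable def enorm {n : ℕ} (v : Fin n → ℝ) : ℝ := Real.sqrt (∑ i, v i ^ 2)

/-! The Krylov space `K_{2q+1}(A, b)` splits into its even part `K_{q+1}(A², b)` and its odd part
`K_q(A², A b)`, which are orthogonal when `A` is skew-symmetric, since
`(A^{2i} b) ⬝ (A^{2j+1} b) = b ⬝ (A^{2i+2j+1} b) = 0`. The residual `r = b - A xᴿ` lies in the even
part, so `r ⟂ A e` for every even `e`, while `r ⟂ A o` for every odd `o` is the normal equation of
the minimisation over `K_q(A², A b)`. Hence `r ⟂ A w` for all `w ∈ K_{2q+1}(A, b)`, which is the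
normal equation over the larger space. -/

section DotProduct

variable {ι : Type*} [Fintype ι]

theorem dotProduct_self_nonneg (v : ι → ℝ) : 0 ≤ v ⬝ᵥ v :=
  Finset.sum_nonneg fun i _ => mul_self_nonneg (v i)

theorem dotProduct_self_add (r s : ι → ℝ) :
    (r + s) ⬝ᵥ (r + s) = r ⬝ᵥ r + 2 * (r ⬝ᵥ s) + s ⬝ᵥ s := by
  rw [add_dotProduct, dotProduct_add, dotProduct_add, dotProduct_comm s r]
  ring

theorem dotProduct_eq_zero_of_forall_le_add_smul {r s : ι → ℝ}
    (h : ∀ t : ℝ, r ⬝ᵥ r ≤ (r + t • s) ⬝ᵥ (r + t • s)) : r ⬝ᵥ s = 0 := by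
  have hquad : ∀ t : ℝ, 0 ≤ s ⬝ᵥ s * (t * t) + 2 * (r ⬝ᵥ s) * t + 0 := fun t => by
    have := h t
    rw [dotProduct_self_add, dotProduct_smul, smul_dotProduct, dotProduct_smul] at this
    simp only [smul_eq_mul] at this
    linarith
  have hdiscrim := discrim_le_zero hquad
  rw [discrim] at hdiscrim
  nlinarith [sq_nonneg (r ⬝ᵥ s)]

theorem dotProduct_eq_zero_of_mem_span {R : Type*} [CommSemiring R] {s t : Set (ι → R)}
    (h : ∀ u ∈ s, ∀ v ∈ t, u ⬝ᵥ v = 0) {u v : ι → R} (hu : u ∈ Submodule.span R s)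
    (hv : v ∈ Submodule.span R t) : u ⬝ᵥ v = 0 := by
  induction hu, hv using Submodule.span_induction₂ with
  | mem_mem u v hu hv => exact h u hu v hv
  | zero_left => simp
  | zero_right => simp
  | add_left u₁ u₂ v _ _ _ h₁ h₂ => rw [add_dotProduct, h₁, h₂, add_zero]
  | add_right u v₁ v₂ _ _ _ h₁ h₂ => rw [dotProduct_add, h₁, h₂, add_zero]
  | smul_left c u v _ _ h => rw [smul_dotProduct, h, smul_zero]
  | smul_right c u v _ _ h => rw [dotProduct_smul, h, smul_zero]

theorem dotProduct_mulVec_self_eq_zero_of_transpose_eq_neg {B : Matrix ι ι ℝ} (hB : Bᵀ = -B)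
    (u : ι → ℝ) : u ⬝ᵥ (B *ᵥ u) = 0 := by
  have h : u ⬝ᵥ (B *ᵥ u) = -(u ⬝ᵥ (B *ᵥ u)) := by
    conv_lhs => rw [dotProduct_mulVec, ← mulVec_transpose, dotProduct_comm, hB]
    rw [neg_mulVec, dotProduct_neg]
  linarith

end DotProduct

theorem enorm_le_enorm_iff {m : ℕ} {v w : Fin m → ℝ} :
    _root_.enorm v ≤ _root_.enorm w ↔ v ⬝ᵥ v ≤ w ⬝ᵥ w := by
  have hsqrt (u : Fin m → ℝ) : _root_.enorm u = √(u ⬝ᵥ u) := by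
    simp [_root_.enorm, dotProduct, sq]
  rw [hsqrt, hsqrt, Real.sqrt_le_sqrt_iff (dotProduct_self_nonneg w)]

theorem forall_enorm_sub_mulVec_le_iff {m n : ℕ} {A : Matrix (Fin m) (Fin n) ℝ} {b : Fin m → ℝ}
    {S : Submodule ℝ (Fin n → ℝ)} {x : Fin n → ℝ} (hx : x ∈ S) :
    (∀ z ∈ S, _root_.enorm (b - A *ᵥ x) ≤ _root_.enorm (b - A *ᵥ z)) ↔
      ∀ v ∈ S, (b - A *ᵥ x) ⬝ᵥ (A *ᵥ v) = 0 := by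
  have hresidual (z : Fin n → ℝ) : b - A *ᵥ z = (b - A *ᵥ x) + A *ᵥ (x - z) := by
    rw [mulVec_sub]; abel
  constructor
  · intro hmin v hv
    refine dotProduct_eq_zero_of_forall_le_add_smul fun t => ?_
    have := hmin (x - t • v) (S.sub_mem hx (S.smul_mem t hv))
    rwa [hresidual (x - t • v), sub_sub_cancel, mulVec_smul, enorm_le_enorm_iff] at this
  · intro horth z hz
    rw [hresidual z, enorm_le_enorm_iff, dotProduct_self_add, horth _ (S.sub_mem hx hz)]
    linarith [dotProduct_self_nonneg (A *ᵥ (x - z))]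

section Krylov

variable {n : ℕ}

theorem pow_mulVec_mem_krylov (M : Matrix (Fin n) (Fin n) ℝ) (v : Fin n → ℝ) {k m : ℕ}
    (hk : k < m) : M ^ k *ᵥ v ∈ krylov M v m :=
  Submodule.subset_span ⟨k, hk, rfl⟩

theorem krylov_le {M : Matrix (Fin n) (Fin n) ℝ} {v : Fin n → ℝ} {m : ℕ}
    {S : Submodule ℝ (Fin n → ℝ)} (h : ∀ k < m, M ^ k *ᵥ v ∈ S) : krylov M v m ≤ S :=
  Submodule.span_le.2 <| Set.image_subset_iff.2 h

theorem mulVec_mem_krylov_of_commute {B M : Matrix (Fin n) (Fin n) ℝ} (hBM : Commute B M)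
    {v u : Fin n → ℝ} {m : ℕ} (hu : u ∈ krylov M v m) : B *ᵥ u ∈ krylov M (B *ᵥ v) m := by
  refine krylov_le (S := (krylov M (B *ᵥ v) m).comap (toLin' B)) (fun k hk => ?_) hu
  rw [Submodule.mem_comap, toLin'_apply, mulVec_mulVec, (hBM.pow_right k).eq, ← mulVec_mulVec]
  exact pow_mulVec_mem_krylov M _ hk

theorem krylov_mulVec_le (M : Matrix (Fin n) (Fin n) ℝ) (v : Fin n → ℝ) (m : ℕ) :
    krylov M (M *ᵥ v) m ≤ krylov M v (m + 1) :=
  krylov_le fun k hk => by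
    rw [mulVec_mulVec, ← pow_succ]
    exact pow_mulVec_mem_krylov M v (by omega)

theorem krylov_sq_mulVec_le (A : Matrix (Fin n) (Fin n) ℝ) (b : Fin n → ℝ) (q : ℕ) :
    krylov (A ^ 2) (A *ᵥ b) q ≤ krylov A b (2 * q + 1) :=
  krylov_le fun k hk => by
    rw [mulVec_mulVec, ← pow_mul, ← pow_succ]
    exact pow_mulVec_mem_krylov A b (by omega)

theorem krylov_le_krylov_sq_sup (A : Matrix (Fin n) (Fin n) ℝ) (b : Fin n → ℝ) (q : ℕ) :
    krylov A b (2 * q + 1) ≤ krylov (A ^ 2) b (q + 1) ⊔ krylov (A ^ 2) (A *ᵥ b) q :=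
  krylov_le fun k hk => by
    obtain ⟨i, rfl | rfl⟩ := Nat.even_or_odd' k
    · refine Submodule.mem_sup_left ?_
      rw [pow_mul]
      exact pow_mulVec_mem_krylov _ b (by omega)
    · refine Submodule.mem_sup_right ?_
      rw [pow_succ A (2 * i), pow_mul, ← mulVec_mulVec]
      exact pow_mulVec_mem_krylov _ _ (by omega)

theorem dotProduct_eq_zero_of_mem_krylov_sq {A : Matrix (Fin n) (Fin n) ℝ} (hA : Aᵀ = -A)
    {b u v : Fin n → ℝ} {m m' : ℕ} (hu : u ∈ krylov (A ^ 2) b m)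
    (hv : v ∈ krylov (A ^ 2) (A *ᵥ b) m') : u ⬝ᵥ v = 0 := by
  refine dotProduct_eq_zero_of_mem_span ?_ hu hv
  rintro _ ⟨i, -, rfl⟩ _ ⟨j, -, rfl⟩
  have hsym : ((A ^ 2) ^ i)ᵀ = (A ^ 2) ^ i := by rw [transpose_pow, transpose_pow, hA, neg_sq]
  have hskew : (A ^ (2 * (i + j) + 1))ᵀ = -A ^ (2 * (i + j) + 1) := by
    rw [transpose_pow, hA, (odd_two_mul_add_one _).neg_pow]
  calc ((A ^ 2) ^ i *ᵥ b) ⬝ᵥ ((A ^ 2) ^ j *ᵥ (A *ᵥ b))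
      = b ⬝ᵥ (((A ^ 2) ^ i)ᵀ *ᵥ ((A ^ 2) ^ j *ᵥ (A *ᵥ b))) := by
        rw [mulVec_transpose, dotProduct_comm b, ← dotProduct_mulVec, dotProduct_comm]
    _ = b ⬝ᵥ (A ^ (2 * (i + j) + 1) *ᵥ b) := by
        rw [hsym, mulVec_mulVec, mulVec_mulVec, ← pow_add, ← pow_mul, ← pow_succ]
    _ = 0 := dotProduct_mulVec_self_eq_zero_of_transpose_eq_neg hskew b

end Krylov

theorem cgnr_minimizes_larger_subspace_general {n : ℕ} (A : Matrix (Fin n) (Fin n) ℝ)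
    (hA : Aᵀ = -A) (b xR : Fin n → ℝ) (q : ℕ)
    (hxR : xR ∈ krylov (A ^ 2) (A *ᵥ b) q)
    (hmin : ∀ z ∈ krylov (A ^ 2) (A *ᵥ b) q, _root_.enorm (b - A *ᵥ xR) ≤ _root_.enorm (b - A *ᵥ z)) :
    xR ∈ krylov A b (2 * q + 1) ∧
      ∀ z ∈ krylov A b (2 * q + 1), _root_.enorm (b - A *ᵥ xR) ≤ _root_.enorm (b - A *ᵥ z) := by
  have hxR_large := krylov_sq_mulVec_le A b q hxR
  have h_odd := (forall_enorm_sub_mulVec_le_iff hxR).1 hmin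
  have hAxR : A *ᵥ xR ∈ krylov (A ^ 2) b (q + 1) := by
    have := mulVec_mem_krylov_of_commute (Commute.self_pow A 2) hxR
    rw [mulVec_mulVec, ← sq] at this
    exact krylov_mulVec_le _ b q this
  have hr_even : b - A *ᵥ xR ∈ krylov (A ^ 2) b (q + 1) :=
    Submodule.sub_mem _ (by simpa using pow_mulVec_mem_krylov (A ^ 2) b q.succ_pos) hAxR
  have h_even : ∀ e ∈ krylov (A ^ 2) b (q + 1), (b - A *ᵥ xR) ⬝ᵥ (A *ᵥ e) = 0 := fun e he =>
    dotProduct_eq_zero_of_mem_krylov_sq hA hr_even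
      (mulVec_mem_krylov_of_commute (Commute.self_pow A 2) he)
  refine ⟨hxR_large, (forall_enorm_sub_mulVec_le_iff hxR_large).2 fun w hw => ?_⟩
  obtain ⟨e, he, o, ho, rfl⟩ := Submodule.mem_sup.1 (krylov_le_krylov_sq_sup A b q hw)
  rw [mulVec_add, dotProduct_add, h_even e he, h_odd o ho, add_zero]

theorem cgnr_minimizes_larger_subspace {n : ℕ} (A : Matrix (Fin n) (Fin n) ℝ)
    (hA : Aᵀ = -A) (hdet : A.det ≠ 0) (b xR : Fin n → ℝ) (q : ℕ)
    (hxR : xR ∈ krylov (A ^ 2) (A *ᵥ b) q)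
    (hmin : ∀ z ∈ krylov (A ^ 2) (A *ᵥ b) q, _root_.enorm (b - A *ᵥ xR) ≤ _root_.enorm (b - A *ᵥ z)) :
    xR ∈ krylov A b (2 * q + 1) ∧
      ∀ z ∈ krylov A b (2 * q + 1), _root_.enorm (b - A *ᵥ xR) ≤ _root_.enorm (b - A *ᵥ z) :=
  cgnr_minimizes_larger_subspace_general A hA b xR q hxR hmin
end

section
/- Let A be real skew-symmetric and nonsingular with Ax = b. Suppose z = z_e + z_o with z_e ∈ K_{q_e}(A², b) and z_o ∈ K_{q_o}(A², Ab). Then ‖z - x‖² = ‖z_o - x‖² + ‖z_e‖². -/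
open Matrix

noncomputable def vecEnorm {n : ℕ} (v : Fin n → ℝ) : ℝ := Real.sqrt (∑ i, v i ^ 2)

/-!
Since `A` is skew-symmetric, `Aᵏ` is symmetric for even `k` and skew-symmetric for odd `k`, so
`⟪Aⁱ u, Aʲ u⟫ = ±⟪u, Aⁱ⁺ʲ u⟫ = 0` whenever `i + j` is odd. Hence the even Krylov space
`K(A², b) = span {A²ᵏ b}` is orthogonal both to the odd one `K(A², Ab) = span {A²ʲ⁺¹ b}` and to
`x`, because `⟪x, A²ᵏ b⟫ = ⟪x, A²ᵏ⁺¹ x⟫`. The identity is then Pythagoras for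
`z - x = (z_o - x) + z_e`.
-/

section SkewSymmetric

variable {ι R : Type*} [Fintype ι] [CommRing R]

theorem dotProduct_mulVec_self_eq_zero_of_transpose_eq_neg_s13 [NoZeroDivisors R] [CharZero R]
    {M : Matrix ι ι R} (hM : Mᵀ = -M) (v : ι → R) : v ⬝ᵥ (M *ᵥ v) = 0 := by
  have h : v ⬝ᵥ (M *ᵥ v) = -(v ⬝ᵥ (M *ᵥ v)) := by
    conv_lhs => rw [dotProduct_mulVec, ← mulVec_transpose, hM, neg_mulVec, neg_dotProduct,
      dotProduct_comm]
  exact self_eq_neg.mp h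

theorem transpose_pow_eq_neg_of_odd [DecidableEq ι] {A : Matrix ι ι R} (hA : Aᵀ = -A) {k : ℕ}
    (hk : Odd k) : (A ^ k)ᵀ = -A ^ k := by
  rw [transpose_pow, hA, hk.neg_pow]

theorem dotProduct_pow_mulVec_eq_zero_of_odd_add [DecidableEq ι] [NoZeroDivisors R] [CharZero R]
    {A : Matrix ι ι R} (hA : Aᵀ = -A) {i j : ℕ} (hij : Odd (i + j)) (u : ι → R) :
    (A ^ i *ᵥ u) ⬝ᵥ (A ^ j *ᵥ u) = 0 := by
  have hzero :=
    dotProduct_mulVec_self_eq_zero_of_transpose_eq_neg_s13 (transpose_pow_eq_neg_of_odd hA hij) u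
  rw [dotProduct_comm, dotProduct_mulVec, ← mulVec_transpose, mulVec_mulVec, transpose_pow, hA,
    dotProduct_comm]
  rcases Nat.even_or_odd i with hi | hi
  · rwa [hi.neg_pow, ← pow_add]
  · rwa [hi.neg_pow, neg_mul, neg_mulVec, dotProduct_neg, neg_eq_zero, ← pow_add]

end SkewSymmetric

theorem dotProduct_eq_zero_of_mem_krylov {n m : ℕ} {M : Matrix (Fin n) (Fin n) ℝ}
    {u v w : Fin n → ℝ} (h : ∀ k < m, v ⬝ᵥ (M ^ k *ᵥ u) = 0) (hw : w ∈ krylov M u m) :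
    v ⬝ᵥ w = 0 := by
  induction hw using Submodule.span_induction with
  | mem w hw => obtain ⟨k, hk, rfl⟩ := hw; exact h k hk
  | zero => exact dotProduct_zero v
  | add w w' _ _ hw hw' => rw [dotProduct_add, hw, hw', add_zero]
  | smul c w _ hw => rw [dotProduct_smul, hw, smul_zero]

theorem vecEnorm_sq {n : ℕ} (v : Fin n → ℝ) : vecEnorm v ^ 2 = v ⬝ᵥ v := by
  rw [vecEnorm, Real.sq_sqrt (Finset.sum_nonneg fun i _ => sq_nonneg _)]
  simp only [dotProduct, sq]

theorem vecEnorm_add_sq_of_dotProduct_eq_zero {n : ℕ} {v w : Fin n → ℝ} (h : v ⬝ᵥ w = 0) :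
    vecEnorm (v + w) ^ 2 = vecEnorm v ^ 2 + vecEnorm w ^ 2 := by
  rw [vecEnorm_sq, vecEnorm_sq, vecEnorm_sq, add_dotProduct, dotProduct_add, dotProduct_add,
    dotProduct_comm w v, h]
  ring

theorem error_pythagorean_general {n : ℕ} (A : Matrix (Fin n) (Fin n) ℝ)
    (hA : Aᵀ = -A) (b x z ze zo : Fin n → ℝ) (qe qo : ℕ)
    (hx : A *ᵥ x = b) (hz : z = ze + zo)
    (hze : ze ∈ krylov (A ^ 2) b qe) (hzo : zo ∈ krylov (A ^ 2) (A *ᵥ b) qo) :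
    vecEnorm (z - x) ^ 2 = vecEnorm (zo - x) ^ 2 + vecEnorm ze ^ 2 := by
  have hx_even (k : ℕ) : x ⬝ᵥ ((A ^ 2) ^ k *ᵥ b) = 0 := by
    rw [← hx, mulVec_mulVec, ← pow_mul, ← pow_succ]
    exact dotProduct_mulVec_self_eq_zero_of_transpose_eq_neg_s13
      (transpose_pow_eq_neg_of_odd hA (odd_two_mul_add_one k)) x
  have hodd_even (k : ℕ) : zo ⬝ᵥ ((A ^ 2) ^ k *ᵥ b) = 0 := by
    rw [dotProduct_comm]
    refine dotProduct_eq_zero_of_mem_krylov (fun j _ => ?_) hzo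
    rw [mulVec_mulVec, ← pow_mul, ← pow_mul, ← pow_succ]
    exact dotProduct_pow_mulVec_eq_zero_of_odd_add hA ⟨k + j, by ring⟩ b
  have horth : (zo - x) ⬝ᵥ ze = 0 := by
    refine dotProduct_eq_zero_of_mem_krylov (fun k _ => ?_) hze
    rw [sub_dotProduct, hodd_even, hx_even, sub_zero]
  rw [hz, show ze + zo - x = (zo - x) + ze by abel]
  exact vecEnorm_add_sq_of_dotProduct_eq_zero horth

theorem error_pythagorean {n : ℕ} (A : Matrix (Fin n) (Fin n) ℝ)
    (hA : Aᵀ = -A) (hdet : A.det ≠ 0) (b x z ze zo : Fin n → ℝ) (qe qo : ℕ)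
    (hx : A *ᵥ x = b) (hz : z = ze + zo)
    (hze : ze ∈ krylov (A ^ 2) b qe) (hzo : zo ∈ krylov (A ^ 2) (A *ᵥ b) qo) :
    vecEnorm (z - x) ^ 2 = vecEnorm (zo - x) ^ 2 + vecEnorm ze ^ 2 :=
  error_pythagorean_general A hA b x z ze zo qe qo hx hz hze hzo
end
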